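/- Let Γ be a pure shifted simplicial complex of dimension r−1 on [n] with at least two facets, whose set of coloops is [1,a] and whose set of loops is [z,n] (so a < r and z > r+1). Let s, s′ ∈ [1,r] and t, t′ ∈ [r,n]. Then Γ*(s,t) = Γ*(s′,t′) (as families of subsets of [n]) if and only if either (i) t = t′ = r, or (ii) t > r, t′ > r, min(t, z−1) = min(t′, z−1), and max(s−1, a) = max(s′−1, a). -/

import Mathlib

/-- `Γ` is a simplicial complex on the finite ground set `E ⊆ ℕ`. -/
def IsComplexOn (E : Finset ℕ) (Γ : Set (Finset ℕ)) : Prop :=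
  (∅ : Finset ℕ) ∈ Γ ∧ (∀ γ ∈ Γ, γ ⊆ E) ∧ ∀ γ ∈ Γ, ∀ β ⊆ γ, β ∈ Γ

/-- `φ` is a facet (maximal face) of `Γ`. -/
def IsFacetOf (Γ : Set (Finset ℕ)) (φ : Finset ℕ) : Prop :=
  φ ∈ Γ ∧ ∀ ψ ∈ Γ, φ ⊆ ψ → ψ = φ

/-- The join of two simplicial complexes on disjoint vertex sets. -/
def joinC (Γ1 Γ2 : Set (Finset ℕ)) : Set (Finset ℕ) :=
  {γ | ∃ γ1 ∈ Γ1, ∃ γ2 ∈ Γ2, γ = γ1 ∪ γ2}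

/-- The full simplex on the vertex set `S`. -/
def simplexOn (S : Finset ℕ) : Set (Finset ℕ) :=
  {γ | γ ⊆ S}

/-- The interval minor `Γ(s,t) = {γ ⊆ [s,t] : γ ∪ [1,s−1] ∈ Γ}`. -/
def minorC (Γ : Set (Finset ℕ)) (s t : ℕ) : Set (Finset ℕ) :=
  {γ | γ ⊆ Finset.Icc s t ∧ γ ∪ Finset.Icc 1 (s - 1) ∈ Γ}

/-- `Γ*(s,t) = ⟨[1,s−1]⟩ * Γ(s,t)`, the join of the full simplex on `[1,s−1]`
with the interval minor `Γ(s,t)`. -/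
def starMinorC (Γ : Set (Finset ℕ)) (s t : ℕ) : Set (Finset ℕ) :=
  joinC (simplexOn (Finset.Icc 1 (s - 1))) (minorC Γ s t)

/-- `Γ` is shifted with respect to the natural order on `[1,n]`: exchanging a vertex of a
face for a smaller vertex (in the ground set) again yields a face. -/
def IsShiftedNat (n : ℕ) (Γ : Set (Finset ℕ)) : Prop :=
  ∀ γ ∈ Γ, ∀ e ∈ γ, ∀ f ∈ Finset.Icc 1 n, f < e → f ∉ γ →
    insert f (γ.erase e) ∈ Γ

/-- `x` is a coloop of the complex `Γ` with vertex set `V`: it lies in every facet. -/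
def IsColoopOf (V : Finset ℕ) (Γ : Set (Finset ℕ)) (x : ℕ) : Prop :=
  x ∈ V ∧ ∀ φ, IsFacetOf Γ φ → x ∈ φ

/-- `x` is a loop of the complex `Γ` with vertex set `V`: it lies in no facet. -/
def IsLoopOf (V : Finset ℕ) (Γ : Set (Finset ℕ)) (x : ℕ) : Prop :=
  x ∈ V ∧ ∀ φ, IsFacetOf Γ φ → x ∉ φ


open Finset
set_option linter.unusedSectionVars false
set_option linter.unusedVariables false

lemma count_ge {β γ : Finset ℕ} (hcard : β.card = γ.card) {j : ℕ}
    (h : (γ.filter (· < j)).card ≤ (β.filter (· < j)).card) :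
    (β.filter (fun x => ¬ x < j)).card ≤ (γ.filter (fun x => ¬ x < j)).card := by
  have hb := Finset.card_filter_add_card_filter_not (s := β) (· < j)
  have hg := Finset.card_filter_add_card_filter_not (s := γ) (· < j)
  omega

lemma dominance {n : ℕ} {Γ : Set (Finset ℕ)} (hsh : IsShiftedNat n Γ)
    {γ : Finset ℕ} (hγ : γ ∈ Γ) (hγn : γ ⊆ Finset.Icc 1 n) {β : Finset ℕ}
    (hβn : β ⊆ Finset.Icc 1 n) (hcard : β.card = γ.card)
    (hdom : ∀ j, (γ.filter (· < j)).card ≤ (β.filter (· < j)).card) : β ∈ Γ := by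
  suffices h : ∀ N γ, γ.sum id ≤ N → γ ∈ Γ → γ ⊆ Finset.Icc 1 n →
      ∀ β, β ⊆ Finset.Icc 1 n → β.card = γ.card →
      (∀ j, (γ.filter (· < j)).card ≤ (β.filter (· < j)).card) → β ∈ Γ by
    exact h _ γ le_rfl hγ hγn β hβn hcard hdom
  clear hγ hγn hβn hcard hdom β γ
  intro N
  induction N with
  | zero =>
    intro γ hsum hγ hγn β hβn hcard hdom
    have hγe : γ = ∅ := by
      by_contra hne
      obtain ⟨x, hx⟩ := Finset.nonempty_iff_ne_empty.2 hne
      have h1 : 1 ≤ x := (Finset.mem_Icc.1 (hγn hx)).1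
      have : x ≤ γ.sum id := Finset.single_le_sum (fun i _ => Nat.zero_le i) hx
      omega
    subst hγe
    simp only [Finset.card_empty, Finset.card_eq_zero] at hcard
    subst hcard; exact hγ
  | succ N ih =>
    intro γ hsum hγ hγn β hβn hcard hdom
    by_cases heq : β = γ
    · subst heq; exact hγ
    -- both difference sets nonempty
    have hgd : (γ \ β).Nonempty := by
      rw [Finset.sdiff_nonempty]
      intro hsub
      exact heq (Finset.eq_of_subset_of_card_le hsub hcard.le).symm
    have hbd : (β \ γ).Nonempty := by
      rw [Finset.sdiff_nonempty]
      intro hsub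
      exact heq (Finset.eq_of_subset_of_card_le hsub hcard.ge)
    set e := (γ \ β).max' hgd with he
    set f := (β \ γ).max' hbd with hf
    have heγ : e ∈ γ := (Finset.mem_sdiff.1 ((γ \ β).max'_mem hgd)).1
    have heβ : e ∉ β := (Finset.mem_sdiff.1 ((γ \ β).max'_mem hgd)).2
    have hfβ : f ∈ β := (Finset.mem_sdiff.1 ((β \ γ).max'_mem hbd)).1
    have hfγ : f ∉ γ := (Finset.mem_sdiff.1 ((β \ γ).max'_mem hbd)).2
    -- key: subset of high parts
    have hsub_high : ∀ j, f ≤ j → β.filter (fun x => ¬ x < j) ⊆ γ.filter (fun x => ¬ x < j) ∨ True := fun _ _ => Or.inr trivial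
    have hfe : f < e := by
      by_contra hge
      push_neg at hge  -- e ≤ f
      have hef : e < f := lt_of_le_of_ne hge (fun h => heβ (h ▸ hfβ))
      -- γ.filter (¬ · < f) ⊆ β \ {f} high part
      have hsub : γ.filter (fun x => ¬ x < f) ⊆ (β.filter (fun x => ¬ x < f)).erase f := by
        intro x hx
        rw [Finset.mem_filter] at hx
        obtain ⟨hxγ, hxf⟩ := hx
        push_neg at hxf
        have hxβ : x ∈ β := by
          by_contra hxb
          have : x ≤ e := Finset.le_max' _ _ (Finset.mem_sdiff.2 ⟨hxγ, hxb⟩)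
          omega
        refine Finset.mem_erase.2 ⟨fun h => hfγ (h ▸ hxγ), Finset.mem_filter.2 ⟨hxβ, by omega⟩⟩
      have h1 : (γ.filter (fun x => ¬ x < f)).card ≤ (β.filter (fun x => ¬ x < f)).card - 1 := by
        have := Finset.card_le_card hsub
        have hfmem : f ∈ β.filter (fun x => ¬ x < f) := Finset.mem_filter.2 ⟨hfβ, by omega⟩
        have := Finset.card_erase_of_mem hfmem
        omega
      have h2 := count_ge hcard (hdom f)
      have hfmem : f ∈ β.filter (fun x => ¬ x < f) := Finset.mem_filter.2 ⟨hfβ, by omega⟩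
      have : 0 < (β.filter (fun x => ¬ x < f)).card := Finset.card_pos.2 ⟨f, hfmem⟩
      omega
    have hf1n : f ∈ Finset.Icc 1 n := hβn hfβ
    set γ' := insert f (γ.erase e) with hγ'
    have hγ'Γ : γ' ∈ Γ := hsh γ hγ e heγ f hf1n hfe hfγ
    have hfne : f ∉ γ.erase e := fun h => hfγ (Finset.mem_of_mem_erase h)
    have hcard' : γ'.card = γ.card := by
      rw [hγ', Finset.card_insert_of_notMem hfne, Finset.card_erase_of_mem heγ]
      have : 0 < γ.card := Finset.card_pos.2 ⟨e, heγ⟩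
      omega
    have hsum' : γ'.sum id + e = γ.sum id + f := by
      have h1 : (γ.erase e).sum id + e = γ.sum id := Finset.sum_erase_add γ id heγ
      have h2 : γ'.sum id = f + (γ.erase e).sum id := by
        rw [hγ', Finset.sum_insert hfne]; rfl
      omega
    have hesum : e ≤ γ.sum id := Finset.single_le_sum (fun i _ => Nat.zero_le i) heγ
    have hsumN : γ'.sum id ≤ N := by omega
    have hγ'n : γ' ⊆ Finset.Icc 1 n := by
      intro x hx
      rw [hγ', Finset.mem_insert] at hx
      rcases hx with h | h
      · exact h ▸ hf1n
      · exact hγn (Finset.mem_of_mem_erase h)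
    refine ih γ' hsumN hγ'Γ hγ'n β hβn (hcard.trans hcard'.symm) ?_
    intro j
    have hfilt : γ'.filter (· < j) =
        if f < j then insert f ((γ.filter (· < j)).erase e) else (γ.filter (· < j)).erase e := by
      rw [hγ', Finset.filter_insert, Finset.filter_erase]
    by_cases hjf : j ≤ f
    · -- filter equal to γ's: e not < j, f not < j
      have : γ'.filter (· < j) = (γ.filter (· < j)).erase e := by
        rw [hfilt, if_neg (by omega)]
      rw [this]
      have : (γ.filter (· < j)).erase e = γ.filter (· < j) := by
        apply Finset.erase_eq_of_notMem
        intro h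
        have := (Finset.mem_filter.1 h).2
        omega
      rw [this]; exact hdom j
    · push_neg at hjf  -- f < j
      by_cases hje : j ≤ e
      · -- gains f, e not removed (e ≥ j so e not in filter anyway)
        have he_not : e ∉ γ.filter (· < j) := by
          intro h; have := (Finset.mem_filter.1 h).2; omega
        have hstep : γ'.filter (· < j) = insert f (γ.filter (· < j)) := by
          rw [hfilt, if_pos hjf, Finset.erase_eq_of_notMem he_not]
        have hf_not : f ∉ γ.filter (· < j) := fun h => hfγ (Finset.mem_filter.1 h).1
        rw [hstep, Finset.card_insert_of_notMem hf_not]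
        -- need strict: (γ.filter (· < j)).card < (β.filter (· < j)).card
        rcases lt_or_eq_of_le (hdom j) with h | h
        · omega
        · exfalso
          -- then high parts have equal card, but β-high ⊆ γ-high minus e
          have hsubh : β.filter (fun x => ¬ x < j) ⊆ (γ.filter (fun x => ¬ x < j)).erase e := by
            intro x hx
            rw [Finset.mem_filter] at hx
            obtain ⟨hxβ, hxj⟩ := hx
            push_neg at hxj
            have hxγ : x ∈ γ := by
              by_contra hxg
              have : x ≤ f := Finset.le_max' _ _ (Finset.mem_sdiff.2 ⟨hxβ, hxg⟩)
              omega
            exact Finset.mem_erase.2 ⟨fun hh => heβ (hh ▸ hxβ), Finset.mem_filter.2 ⟨hxγ, by omega⟩⟩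
          have hemem : e ∈ γ.filter (fun x => ¬ x < j) := Finset.mem_filter.2 ⟨heγ, by omega⟩
          have h1 := Finset.card_le_card hsubh
          have h2 := Finset.card_erase_of_mem hemem
          have h3 : 0 < (γ.filter (fun x => ¬ x < j)).card := Finset.card_pos.2 ⟨e, hemem⟩
          have hb := Finset.card_filter_add_card_filter_not (s := β) (· < j)
          have hg := Finset.card_filter_add_card_filter_not (s := γ) (· < j)
          omega
      · push_neg at hje -- e < j : lose e gain f
        have hemem : e ∈ γ.filter (· < j) := Finset.mem_filter.2 ⟨heγ, by omega⟩
        have hf_not : f ∉ (γ.filter (· < j)).erase e := by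
          intro h
          exact hfγ (Finset.mem_filter.1 (Finset.mem_of_mem_erase h)).1
        have hstep : γ'.filter (· < j) = insert f ((γ.filter (· < j)).erase e) := by
          rw [hfilt, if_pos hjf]
        rw [hstep, Finset.card_insert_of_notMem hf_not, Finset.card_erase_of_mem hemem]
        have h3 : 0 < (γ.filter (· < j)).card := Finset.card_pos.2 ⟨e, hemem⟩
        have := hdom j
        omega

lemma exists_facet {n : ℕ} {Γ : Set (Finset ℕ)} (hΓ : IsComplexOn (Finset.Icc 1 n) Γ)
    {γ : Finset ℕ} (hγ : γ ∈ Γ) : ∃ φ, IsFacetOf Γ φ ∧ γ ⊆ φ := by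
  suffices h : ∀ k γ, γ ∈ Γ → n ≤ γ.card + k → ∃ φ, IsFacetOf Γ φ ∧ γ ⊆ φ by
    refine h n γ hγ ?_
    have := Finset.card_le_card (hΓ.2.1 γ hγ)
    simp [Nat.card_Icc] at this
    omega
  intro k
  induction k with
  | zero =>
    intro γ hγ hcard
    refine ⟨γ, ⟨hγ, fun ψ hψ hsub => ?_⟩, Finset.Subset.refl γ⟩
    have h1 := Finset.card_le_card (hΓ.2.1 ψ hψ)
    simp [Nat.card_Icc] at h1
    exact Finset.eq_of_subset_of_card_le hsub (by omega) ▸ rfl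
  | succ k ih =>
    intro γ hγ hcard
    by_cases hfac : ∀ ψ ∈ Γ, γ ⊆ ψ → ψ = γ
    · exact ⟨γ, ⟨hγ, hfac⟩, Finset.Subset.refl γ⟩
    · push_neg at hfac
      obtain ⟨ψ, hψΓ, hsub, hne⟩ := hfac
      have hlt : γ.card < ψ.card := Finset.card_lt_card (Finset.ssubset_iff_subset_ne.2 ⟨hsub, fun h => hne h.symm⟩)
      obtain ⟨φ, hφ, hsub'⟩ := ih ψ hψΓ (by omega)
      exact ⟨φ, hφ, hsub.trans hsub'⟩

lemma filt_Icc (m j : ℕ) : (Finset.Icc 1 m).filter (· < j) = Finset.Icc 1 (min m (j-1)) := by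
  ext x; simp only [Finset.mem_filter, Finset.mem_Icc]; omega

lemma ub_a {n j : ℕ} {S : Finset ℕ} (hS : S ⊆ Finset.Icc 1 n) :
    (S.filter (· < j)).card ≤ j - 1 := by
  have hsub : S.filter (· < j) ⊆ Finset.Icc 1 (j-1) := by
    intro x hx
    rw [Finset.mem_filter] at hx
    have := (Finset.mem_Icc.1 (hS hx.1)).1
    rw [Finset.mem_Icc]; omega
  have := Finset.card_le_card hsub
  simp [Nat.card_Icc] at this
  omega

lemma ub_c {n j y : ℕ} {S : Finset ℕ} (hS : S ⊆ Finset.Icc 1 n) (hy : y ∉ S)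
    (hy1 : 1 ≤ y) (hyj : y < j) : (S.filter (· < j)).card ≤ j - 2 := by
  have hsub : S.filter (· < j) ⊆ (Finset.Icc 1 (j-1)).erase y := by
    intro x hx
    rw [Finset.mem_filter] at hx
    have := (Finset.mem_Icc.1 (hS hx.1)).1
    rw [Finset.mem_erase, Finset.mem_Icc]
    exact ⟨fun h => hy (h ▸ hx.1), by omega⟩
  have := Finset.card_le_card hsub
  rw [Finset.card_erase_of_mem (Finset.mem_Icc.2 (by omega)), Nat.card_Icc] at this
  omega

lemma ub_d {j y : ℕ} {S : Finset ℕ} (hy : y ∈ S) (hyj : j ≤ y) :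
    (S.filter (· < j)).card ≤ S.card - 1 := by
  have hsub : S.filter (· < j) ⊆ S.erase y := by
    intro x hx
    rw [Finset.mem_filter] at hx
    exact Finset.mem_erase.2 ⟨fun h => by omega, hx.1⟩
  have := Finset.card_le_card hsub
  rw [Finset.card_erase_of_mem hy] at this
  exact this

lemma card_le_r {n r : ℕ} {Γ : Set (Finset ℕ)} (hΓ : IsComplexOn (Finset.Icc 1 n) Γ)
    (hpure : ∀ φ, IsFacetOf Γ φ → φ.card = r) {γ : Finset ℕ} (hγ : γ ∈ Γ) : γ.card ≤ r := by
  obtain ⟨φ, hφ, hsub⟩ := exists_facet hΓ hγ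
  exact (Finset.card_le_card hsub).trans (hpure φ hφ).le

lemma mem_lt_z {n r z : ℕ} {Γ : Set (Finset ℕ)} (hΓ : IsComplexOn (Finset.Icc 1 n) Γ)
    (hpure : ∀ φ, IsFacetOf Γ φ → φ.card = r) (hloop : ∀ x, IsLoopOf (Finset.Icc 1 n) Γ x ↔ x ∈ Finset.Icc z n)
    {γ : Finset ℕ} (hγ : γ ∈ Γ) {x : ℕ} (hx : x ∈ γ) : x < z := by
  by_contra hge
  push_neg at hge
  obtain ⟨φ, hφ, hsub⟩ := exists_facet hΓ hγ
  have hxn := Finset.mem_Icc.1 (hΓ.2.1 γ hγ hx)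
  exact ((hloop x).2 (Finset.mem_Icc.2 ⟨hge, hxn.2⟩)).2 φ hφ (hsub hx)

lemma Icc1r_mem {n r : ℕ} {Γ : Set (Finset ℕ)} (hΓ : IsComplexOn (Finset.Icc 1 n) Γ)
    (hsh : IsShiftedNat n Γ) (hpure : ∀ φ, IsFacetOf Γ φ → φ.card = r) (htwo : ∃ φ ψ, IsFacetOf Γ φ ∧ IsFacetOf Γ ψ ∧ φ ≠ ψ) (hrn : r ≤ n) :
    Finset.Icc 1 r ∈ Γ := by
  obtain ⟨φ, _, hφ, _, _⟩ := htwo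
  refine dominance hsh hφ.1 (hΓ.2.1 φ hφ.1) ?_ ?_ ?_
  · intro x hx; rw [Finset.mem_Icc] at *; omega
  · rw [Nat.card_Icc, hpure φ hφ]; omega
  · intro j
    rw [filt_Icc, Nat.card_Icc]
    have h1 := ub_a (hΓ.2.1 φ hφ.1) (j := j)
    have h2 := Finset.card_filter_le φ (· < j)
    have h3 := hpure φ hφ
    omega

-- non-loop vertices lie in facets
lemma nonloop_facet {n z : ℕ} {Γ : Set (Finset ℕ)} (hΓ : IsComplexOn (Finset.Icc 1 n) Γ) (hloop : ∀ x, IsLoopOf (Finset.Icc 1 n) Γ x ↔ x ∈ Finset.Icc z n)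
    {x : ℕ} (hx1 : 1 ≤ x) (hxz : x < z) (hxn : x ≤ n) :
    ∃ φ, IsFacetOf Γ φ ∧ x ∈ φ := by
  have h : ¬ IsLoopOf (Finset.Icc 1 n) Γ x := by
    rw [hloop, Finset.mem_Icc]; omega
  rw [IsLoopOf] at h
  push_neg at h
  obtain ⟨φ, hφ, hxφ⟩ := h (Finset.mem_Icc.2 ⟨hx1, hxn⟩)
  exact ⟨φ, hφ, hxφ⟩

lemma L1 {n r z : ℕ} {Γ : Set (Finset ℕ)} (hΓ : IsComplexOn (Finset.Icc 1 n) Γ)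
    (hsh : IsShiftedNat n Γ) (hpure : ∀ φ, IsFacetOf Γ φ → φ.card = r) (hloop : ∀ x, IsLoopOf (Finset.Icc 1 n) Γ x ↔ x ∈ Finset.Icc z n)
    (htwo : ∃ φ ψ, IsFacetOf Γ φ ∧ IsFacetOf Γ ψ ∧ φ ≠ ψ) (hrn : r ≤ n)
    {b x : ℕ} (hb : b < r) (hx1 : 1 ≤ x) (hxz : x < z) (hxn : x ≤ n) :
    Finset.Icc 1 b ∪ {x} ∈ Γ := by
  by_cases hxr : x ≤ r
  · refine hΓ.2.2 _ (Icc1r_mem hΓ hsh hpure htwo hrn) _ ?_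
    intro y hy
    rw [Finset.mem_union, Finset.mem_Icc, Finset.mem_singleton] at hy
    rw [Finset.mem_Icc]; omega
  · push_neg at hxr
    obtain ⟨φ, hφ, hxφ⟩ := nonloop_facet hΓ hloop hx1 hxz hxn
    have hβ : Finset.Icc 1 (r-1) ∪ {x} ∈ Γ := by
      refine dominance hsh hφ.1 (hΓ.2.1 φ hφ.1) ?_ ?_ ?_
      · intro y hy
        rw [Finset.mem_union, Finset.mem_Icc, Finset.mem_singleton] at hy
        rw [Finset.mem_Icc]; omega
      · rw [Finset.card_union_of_disjoint, Nat.card_Icc, Finset.card_singleton, hpure φ hφ]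
        · omega
        · rw [Finset.disjoint_singleton_right, Finset.mem_Icc]; omega
      · intro j
        rw [Finset.filter_union, Finset.filter_singleton, filt_Icc]
        by_cases hxj : x < j
        · rw [if_pos hxj, Finset.card_union_of_disjoint
            (by rw [Finset.disjoint_singleton_right, Finset.mem_Icc]; omega)]
          have h2 := Finset.card_filter_le φ (· < j)
          have h3 := hpure φ hφ
          rw [Nat.card_Icc, Finset.card_singleton]
          omega
        · rw [if_neg hxj, Finset.union_empty, Nat.card_Icc]
          have h1 := ub_a (hΓ.2.1 φ hφ.1) (j := j)
          have h2 := ub_d hxφ (by omega : j ≤ x)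
          have h3 := hpure φ hφ
          omega
    refine hΓ.2.2 _ hβ _ ?_
    intro y hy
    rw [Finset.mem_union, Finset.mem_Icc, Finset.mem_singleton] at hy
    rw [Finset.mem_union, Finset.mem_Icc, Finset.mem_singleton]
    omega

lemma L2 {n r a : ℕ} {Γ : Set (Finset ℕ)} (hΓ : IsComplexOn (Finset.Icc 1 n) Γ)
    (hsh : IsShiftedNat n Γ) (hpure : ∀ φ, IsFacetOf Γ φ → φ.card = r) (hcol : ∀ x, IsColoopOf (Finset.Icc 1 n) Γ x ↔ x ∈ Finset.Icc 1 a)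
    (har : a < r) (hrn : r + 1 ≤ n)
    {v : ℕ} (hv1 : a + 1 ≤ v) (hvr : v ≤ r + 1) :
    (Finset.Icc 1 (r+1)).erase v ∈ Γ := by
  -- facet avoiding a+1
  have h : ¬ IsColoopOf (Finset.Icc 1 n) Γ (a+1) := by
    rw [hcol, Finset.mem_Icc]; omega
  rw [IsColoopOf] at h
  push_neg at h
  obtain ⟨ψ, hψ, haψ⟩ := h (Finset.mem_Icc.2 ⟨by omega, by omega⟩)
  refine dominance hsh hψ.1 (hΓ.2.1 ψ hψ.1) ?_ ?_ ?_
  · intro y hy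
    have := Finset.mem_Icc.1 (Finset.mem_of_mem_erase hy)
    rw [Finset.mem_Icc]; omega
  · rw [Finset.card_erase_of_mem (Finset.mem_Icc.2 ⟨by omega, hvr⟩), Nat.card_Icc, hpure ψ hψ]
    omega
  · intro j
    rw [Finset.filter_erase, filt_Icc]
    have h2 := Finset.card_filter_le ψ (· < j)
    have h3 := hpure ψ hψ
    have h1 := ub_a (hΓ.2.1 ψ hψ.1) (j := j) (S := ψ)
    by_cases hvm : v ∈ Finset.Icc 1 (min (r+1) (j-1))
    · rw [Finset.card_erase_of_mem hvm, Nat.card_Icc]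
      rw [Finset.mem_Icc] at hvm
      have h4 := ub_c (hΓ.2.1 ψ hψ.1) haψ (by omega : 1 ≤ a+1) (by omega : a+1 < j)
      omega
    · rw [Finset.erase_eq_of_notMem hvm, Nat.card_Icc]
      rw [Finset.mem_Icc] at hvm
      omega

lemma canon {n r a z : ℕ} {Γ : Set (Finset ℕ)}
    (hΓ : IsComplexOn (Finset.Icc 1 n) Γ)
    (hpure : ∀ φ, IsFacetOf Γ φ → φ.card = r)
    (hcol : ∀ x, IsColoopOf (Finset.Icc 1 n) Γ x ↔ x ∈ Finset.Icc 1 a)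
    (hloop : ∀ x, IsLoopOf (Finset.Icc 1 n) Γ x ↔ x ∈ Finset.Icc z n)
    (har : a < r) (hrz : r + 1 < z)
    {s t : ℕ} (hs : 1 ≤ s) (hsr : s ≤ r) (hrt : r ≤ t) (htn : t ≤ n) :
    starMinorC Γ s t =
      {γ : Finset ℕ | γ ⊆ Finset.Icc 1 (min t (z - 1)) ∧
        γ ∪ Finset.Icc 1 (max (s - 1) a) ∈ Γ} := by
  ext γ
  simp only [starMinorC, joinC, simplexOn, minorC, Set.mem_setOf_eq]
  constructor
  · rintro ⟨γ1, h1, γ2, ⟨h2sub, h2mem⟩, rfl⟩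
    obtain ⟨φ, hφ, hsubφ⟩ := exists_facet hΓ h2mem
    have hcolφ : Finset.Icc 1 a ⊆ φ := by
      intro x hx
      exact ((hcol x).2 hx).2 φ hφ
    constructor
    · intro x hx
      rw [Finset.mem_union] at hx
      rw [Finset.mem_Icc]
      rcases hx with h | h
      · have := Finset.mem_Icc.1 (h1 h)
        omega
      · have h2 := Finset.mem_Icc.1 (h2sub h)
        have h3 : x < z := mem_lt_z hΓ hpure hloop h2mem (Finset.mem_union_left _ h)
        omega
    · refine hΓ.2.2 φ hφ.1 _ ?_
      intro x hx
      simp only [Finset.mem_union] at hx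
      rcases hx with (h | h) | h
      · exact hsubφ (Finset.mem_union_right _ (h1 h))
      · exact hsubφ (Finset.mem_union_left _ h)
      · rw [Finset.mem_Icc] at h
        rcases le_or_gt x (s-1) with h' | h'
        · exact hsubφ (Finset.mem_union_right _ (Finset.mem_Icc.2 ⟨h.1, h'⟩))
        · exact hcolφ (Finset.mem_Icc.2 ⟨h.1, by omega⟩)
  · rintro ⟨hsub, hmem⟩
    refine ⟨γ.filter (· ≤ s - 1), ?_, γ.filter (fun x => ¬ x ≤ s - 1), ⟨?_, ?_⟩, ?_⟩
    · intro x hx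
      rw [Finset.mem_filter] at hx
      have := Finset.mem_Icc.1 (hsub hx.1)
      rw [Finset.mem_Icc]; omega
    · intro x hx
      rw [Finset.mem_filter] at hx
      have := Finset.mem_Icc.1 (hsub hx.1)
      rw [Finset.mem_Icc]; omega
    · refine hΓ.2.2 _ hmem _ ?_
      intro x hx
      rw [Finset.mem_union] at hx ⊢
      rcases hx with h | h
      · exact Or.inl (Finset.mem_filter.1 h).1
      · rw [Finset.mem_Icc] at h
        exact Or.inr (Finset.mem_Icc.2 ⟨h.1, by omega⟩)
    · rw [Finset.filter_union_filter_not_eq]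

/-- For a pure shifted complex `Γ` on `[n]` with at least two facets, coloops `[1,a]`
and loops `[z,n]`: `Γ*(s,t) = Γ*(s′,t′)` if and only if either `t = t′ = r`, or
`t, t′ > r`, `min(t,z−1) = min(t′,z−1)` and `max(s−1,a) = max(s′−1,a)`. -/
theorem shifted_starMinor_eq_iff
    (n r a z : ℕ) (Γ : Set (Finset ℕ))
    (hΓ : IsComplexOn (Finset.Icc 1 n) Γ) (hsh : IsShiftedNat n Γ)
    (hr : 1 ≤ r)
    (hpure : ∀ φ, IsFacetOf Γ φ → φ.card = r)
    (htwo : ∃ φ ψ, IsFacetOf Γ φ ∧ IsFacetOf Γ ψ ∧ φ ≠ ψ)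
    (hcol : ∀ x, IsColoopOf (Finset.Icc 1 n) Γ x ↔ x ∈ Finset.Icc 1 a)
    (hloop : ∀ x, IsLoopOf (Finset.Icc 1 n) Γ x ↔ x ∈ Finset.Icc z n)
    (har : a < r) (hrz : r + 1 < z) (hzn : z ≤ n + 1)
    (s s' t t' : ℕ) (hs : 1 ≤ s) (hsr : s ≤ r) (hs' : 1 ≤ s') (hsr' : s' ≤ r)
    (hrt : r ≤ t) (htn : t ≤ n) (hrt' : r ≤ t') (htn' : t' ≤ n) :
    starMinorC Γ s t = starMinorC Γ s' t' ↔
      ((t = r ∧ t' = r) ∨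
       (r < t ∧ r < t' ∧ min t (z - 1) = min t' (z - 1) ∧
        max (s - 1) a = max (s' - 1) a)) := by
  have hrn : r + 1 ≤ n := by omega
  rw [canon hΓ hpure hcol hloop har hrz hs hsr hrt htn,
      canon hΓ hpure hcol hloop har hrz hs' hsr' hrt' htn']
  set m := min t (z-1) with hm
  set m' := min t' (z-1) with hm'
  set B := max (s-1) a with hB
  set B' := max (s'-1) a with hB'
  have hBr : B < r := by omega
  have hBr' : B' < r := by omega
  have hmr : r ≤ m := by omega
  have hmr' : r ≤ m' := by omega
  have hmn : m ≤ n := by omega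
  have hmn' : m' ≤ n := by omega
  have hmz : m ≤ z - 1 := by omega
  have hmz' : m' ≤ z - 1 := by omega
  -- singleton membership
  have single : ∀ (M C x : ℕ), C < r → M ≤ z - 1 → M ≤ n → 1 ≤ x → x ≤ M →
      ({x} : Finset ℕ) ∈ {γ : Finset ℕ | γ ⊆ Finset.Icc 1 M ∧ γ ∪ Finset.Icc 1 C ∈ Γ} := by
    intro M C x hC hMz hMn hx1 hxM
    constructor
    · simp only [Finset.singleton_subset_iff, Finset.mem_Icc]; omega
    · rw [Finset.union_comm]
      exact L1 hΓ hsh hpure hloop htwo (by omega) hC hx1 (by omega) (by omega)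
  constructor
  · intro hEq
    -- m = m'
    have hmm : m = m' := by
      have h1 := single m B m hBr hmz hmn (by omega) le_rfl
      have h2 := single m' B' m' hBr' hmz' hmn' (by omega) le_rfl
      rw [hEq] at h1
      rw [← hEq] at h2
      have h3 := h1.1 (Finset.mem_singleton_self m)
      have h4 := h2.1 (Finset.mem_singleton_self m')
      rw [Finset.mem_Icc] at h3 h4
      omega
    by_cases htr : t = r
    · left
      constructor
      · exact htr
      · omega
    · right
      have htgt : r < t := by omega
      have hmr1 : r + 1 ≤ m := by omega
      have htgt' : r < t' := by omega
      refine ⟨htgt, htgt', by omega, ?_⟩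
      -- show B = B'
      have hwit : ∀ C C' : ℕ, a ≤ C → C < C' → C' < r →
          {γ : Finset ℕ | γ ⊆ Finset.Icc 1 m ∧ γ ∪ Finset.Icc 1 C ∈ Γ} ≠
          {γ : Finset ℕ | γ ⊆ Finset.Icc 1 m ∧ γ ∪ Finset.Icc 1 C' ∈ Γ} := by
        intro C C' hC hCC hC' hEq2
        set γ0 := (Finset.Icc 1 (r+1)).erase C' with hγ0
        have hg0m : γ0 ⊆ Finset.Icc 1 m := by
          intro x hx
          have := Finset.mem_Icc.1 (Finset.mem_of_mem_erase hx)
          rw [Finset.mem_Icc]; omega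
        have hIccsub : Finset.Icc 1 C ⊆ γ0 := by
          intro x hx
          rw [Finset.mem_Icc] at hx
          rw [hγ0, Finset.mem_erase, Finset.mem_Icc]
          omega
        have hunC : γ0 ∪ Finset.Icc 1 C = γ0 := Finset.union_eq_left.2 hIccsub
        have hg0Γ : γ0 ∈ Γ := L2 hΓ hsh hpure hcol har hrn (by omega) (by omega)
        have hmem : γ0 ∈ {γ : Finset ℕ | γ ⊆ Finset.Icc 1 m ∧ γ ∪ Finset.Icc 1 C ∈ Γ} :=
          ⟨hg0m, by rw [hunC]; exact hg0Γ⟩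
        rw [hEq2] at hmem
        have hfill : γ0 ∪ Finset.Icc 1 C' = Finset.Icc 1 (r+1) := by
          ext x
          rw [Finset.mem_union, hγ0, Finset.mem_erase, Finset.mem_Icc, Finset.mem_Icc]
          omega
        have hbad := hmem.2
        rw [hfill] at hbad
        have := card_le_r hΓ hpure hbad
        rw [Nat.card_Icc] at this
        omega
      rcases lt_trichotomy B B' with h | h | h
      · exact absurd (by rw [← hmm] at hEq; exact hEq) (hwit B B' (by omega) h (by omega))
      · exact h
      · rw [← hmm] at hEq
        exact absurd hEq.symm (hwit B' B (by omega) h (by omega))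
  · intro h
    rcases h with ⟨ht, ht'⟩ | ⟨_, _, hmin, hmax⟩
    · have hm1 : m = r := by omega
      have hm2 : m' = r := by omega
      rw [hm1, hm2]
      have hall : ∀ C, C < r → ∀ γ : Finset ℕ, γ ⊆ Finset.Icc 1 r →
          γ ∪ Finset.Icc 1 C ∈ Γ := by
        intro C hC γ hγ
        refine hΓ.2.2 _ (Icc1r_mem hΓ hsh hpure htwo (by omega)) _ ?_
        intro x hx
        rw [Finset.mem_union] at hx
        rcases hx with h | h
        · exact hγ h
        · rw [Finset.mem_Icc] at h; rw [Finset.mem_Icc]; omega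
      ext γ
      simp only [Set.mem_setOf_eq]
      exact ⟨fun ⟨h1, _⟩ => ⟨h1, hall B' hBr' γ h1⟩, fun ⟨h1, _⟩ => ⟨h1, hall B hBr γ h1⟩⟩
    · rw [hmin, hmax]
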